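/- arXiv:1710.08252 — 2 statements merged into one kernel-verified Lean document; each statement's English description precedes it below -/
import Mathlib

section
/- Let F be a field of characteristic p, 0 ≠ f ∈ F((t)), k ≥ 0, and n ∈ ℕ coprime to p. Let E be the subfield of F((t)) generated over the prime-field rational functions K(t) (K any subfield with t transcendental, e.g. take the field generated by t) by f, ∂^{(1)}f, ..., ∂^{(k)}f, and let L be the subfield generated by f^n, ∂^{(1)}(f^n), ..., ∂^{(k)}(f^n). Then each ∂^{(j)}(f) for 1 ≤ j ≤ k lies in the field L(f); in particular E = L(f) is algebraic over L. -/
/-!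
The Hasse derivatives assemble into a ring homomorphism `f ↦ ∑ᵤ ∂⁽ᵘ⁾f Xᵘ` into power series
(the Leibniz rule is Vandermonde's identity). In characteristic `p` it commutes with Frobenius, so
a `pˢ`-th power `c` behaves like a constant: `∂⁽ʲ⁾(g c) = c ∂⁽ʲ⁾g` for `j < pˢ`.
Take `pˢ > k` and `n m = pˢ B + 1`; then `f^(n m) = f (f^B)^(pˢ)`, so
`∂⁽ʲ⁾f = (f^B)^(-pˢ) ∂⁽ʲ⁾((fⁿ)ᵐ)`, and the latter is a polynomial in the `∂⁽ⁱ⁾(fⁿ)`, `i ≤ j`.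
This gives `∂⁽ʲ⁾f ∈ L(f)`; conversely each `∂⁽ⁱ⁾(fⁿ)` is a polynomial in the `∂⁽ʲ⁾f`, so `L ≤ E`.
-/

noncomputable section

open HahnSeries

variable {F : Type*} [Field F]

/-- The `n`-th Hasse derivative (hyperderivative) with respect to `t` on Laurent series:
`∂ₜ⁽ⁿ⁾ (∑ xᵢ tⁱ) = ∑ C(i,n) xᵢ t^(i-n)`. -/
def lhasse (n : ℕ) (f : LaurentSeries F) : LaurentSeries F where
  coeff i := ((Ring.choose (i + (n : ℤ)) n : ℤ) : F) * f.coeff (i + (n : ℤ))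
  isPWO_support' := by
    have h : (Function.support fun i : ℤ =>
        ((Ring.choose (i + (n : ℤ)) n : ℤ) : F) * f.coeff (i + (n : ℤ))) ⊆
        (fun x : ℤ => x - (n : ℤ)) '' (Function.support f.coeff) := by
      intro i hi
      have hf : f.coeff (i + (n : ℤ)) ≠ 0 := by
        intro h0
        apply hi
        simp [h0]
      exact ⟨i + n, hf, by ring⟩
    exact (f.isPWO_support'.image_of_monotone
      (fun a b hab => by simpa using hab : Monotone fun x : ℤ => x - (n : ℤ))).mono h

-- `Finset.antidiagonal` itself is the antidiagonal of two well-ordered sets, used for `HahnSeries`.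
open Finset.HasAntidiagonal (antidiagonal)

lemma HahnSeries.coeff_mul_of_support_subset {Γ R : Type*} [AddCommMonoid Γ] [PartialOrder Γ]
    [IsOrderedCancelAddMonoid Γ] [NonUnitalNonAssocSemiring R] {x y : HahnSeries Γ R}
    {s t : Set Γ} (hs : s.IsPWO) (ht : t.IsPWO) (hxs : x.support ⊆ s) (hyt : y.support ⊆ t)
    (a : Γ) :
    (x * y).coeff a = ∑ ij ∈ Finset.antidiagonal hs ht a, x.coeff ij.1 * y.coeff ij.2 := by
  rw [coeff_mul_left' hs hxs]
  refine Finset.sum_subset (Finset.antidiagonal_mono_right hyt) fun ij hij hij' => ?_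
  rw [Finset.mem_antidiagonal] at hij hij'
  have hy : y.coeff ij.2 = 0 := by_contra fun h => hij' ⟨hij.1, h, hij.2.2⟩
  rw [hy, mul_zero]

section CommRing

variable {R : Type*} [CommRing R]

/-- `tᵘ ∂⁽ᵘ⁾f`; the twist removes the index shift of `lhasse`. -/
def twistedHasse (u : ℕ) (f : LaurentSeries R) : LaurentSeries R where
  coeff c := ((Ring.choose c u : ℤ) : R) * f.coeff c
  isPWO_support' := f.isPWO_support.mono fun _ hc => right_ne_zero_of_mul hc

@[simp]
lemma twistedHasse_coeff (u : ℕ) (f : LaurentSeries R) (c : ℤ) :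
    (twistedHasse u f).coeff c = ((Ring.choose c u : ℤ) : R) * f.coeff c := rfl

lemma support_twistedHasse_subset (u : ℕ) (f : LaurentSeries R) :
    (twistedHasse u f).support ⊆ f.support :=
  fun _ hc => right_ne_zero_of_mul hc

@[simp]
lemma twistedHasse_zero (f : LaurentSeries R) : twistedHasse 0 f = f := by
  ext c; simp

lemma twistedHasse_add (u : ℕ) (f g : LaurentSeries R) :
    twistedHasse u (f + g) = twistedHasse u f + twistedHasse u g := by
  ext c; simp [mul_add]

lemma twistedHasse_one (u : ℕ) :
    twistedHasse u (1 : LaurentSeries R) = if u = 0 then 1 else 0 := by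
  ext c
  rcases eq_or_ne c 0 with rfl | hc
  · rcases eq_or_ne u 0 with rfl | hu
    · simp
    · simp [hu, Ring.choose_zero_pos ℤ (Nat.pos_of_ne_zero hu)]
  · split_ifs <;> simp [HahnSeries.coeff_one, hc]

lemma twistedHasse_mul (u : ℕ) (f g : LaurentSeries R) :
    twistedHasse u (f * g) =
      ∑ ij ∈ antidiagonal u, twistedHasse ij.1 f * twistedHasse ij.2 g := by
  ext c
  have hterm : ∀ ij : ℕ × ℕ, (twistedHasse ij.1 f * twistedHasse ij.2 g).coeff c =
      ∑ ab ∈ Finset.antidiagonal f.isPWO_support g.isPWO_support c,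
        ((Ring.choose ab.1 ij.1 * Ring.choose ab.2 ij.2 : ℤ) : R) *
          (f.coeff ab.1 * g.coeff ab.2) := by
    intro ij
    rw [coeff_mul_of_support_subset f.isPWO_support g.isPWO_support
      (support_twistedHasse_subset _ f) (support_twistedHasse_subset _ g)]
    refine Finset.sum_congr rfl fun ab _ => ?_
    simp only [twistedHasse_coeff]
    push_cast
    ring
  rw [HahnSeries.coeff_sum, Finset.sum_congr rfl fun ij _ => hterm ij, Finset.sum_comm,
    twistedHasse_coeff, coeff_mul, Finset.mul_sum]
  refine Finset.sum_congr rfl fun ab hab => ?_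
  rw [← Finset.sum_mul, ← Int.cast_sum, ← Ring.add_choose_eq _ (Commute.all _ _),
    (Finset.mem_antidiagonal.1 hab).2.2]

/-- `f ↦ ∑ᵤ tᵘ ∂⁽ᵘ⁾f Xᵘ`, the Taylor expansion `f(t + tX)`. -/
def hasseExpansion : LaurentSeries R →+* PowerSeries (LaurentSeries R) where
  toFun f := PowerSeries.mk fun u => twistedHasse u f
  map_one' := by
    ext u
    rw [PowerSeries.coeff_mk, twistedHasse_one, PowerSeries.coeff_one]
  map_mul' f g := by
    ext u
    rw [PowerSeries.coeff_mk, twistedHasse_mul, PowerSeries.coeff_mul]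
    simp only [PowerSeries.coeff_mk]
  map_zero' := by
    ext u c
    simp
  map_add' f g := by
    ext u
    simp only [PowerSeries.coeff_mk, map_add, twistedHasse_add]

@[simp]
lemma coeff_hasseExpansion (u : ℕ) (f : LaurentSeries R) :
    PowerSeries.coeff u (hasseExpansion f) = twistedHasse u f := by
  simp [hasseExpansion]

lemma hasseExpansion_pow_char_pow (p : ℕ) [ExpChar R p] (f : LaurentSeries R) (s : ℕ) :
    hasseExpansion (f ^ p ^ s) = PowerSeries.C (f ^ p ^ s) +
      PowerSeries.X ^ p ^ s * (PowerSeries.mk fun u => twistedHasse (u + 1) f) ^ p ^ s := by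
  have : ExpChar (PowerSeries (LaurentSeries R)) p :=
    expChar_of_injective_ringHom (f := PowerSeries.C.comp HahnSeries.C)
      (PowerSeries.C_injective.comp HahnSeries.C_injective) p
  have hsplit : hasseExpansion f =
      PowerSeries.C f + PowerSeries.X * PowerSeries.mk fun u => twistedHasse (u + 1) f := by
    ext (_ | u) <;> simp [PowerSeries.coeff_succ_X_mul]
  rw [map_pow, hsplit, add_pow_expChar_pow, mul_pow, map_pow]

lemma twistedHasse_mul_pow_char_pow (p : ℕ) [ExpChar R p] {u s : ℕ} (hu : u < p ^ s)
    (f g : LaurentSeries R) : twistedHasse u (f * g ^ p ^ s) = twistedHasse u f * g ^ p ^ s := by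
  rw [← coeff_hasseExpansion, map_mul, hasseExpansion_pow_char_pow p, mul_add,
    map_add, PowerSeries.coeff_mul_C, mul_left_comm, PowerSeries.coeff_X_pow_mul',
    if_neg (not_le.2 hu), add_zero, coeff_hasseExpansion]

def hasseSubring (S : Subring (LaurentSeries R)) (k : ℕ) : Subring (LaurentSeries R) where
  carrier := {f | ∀ u ≤ k, twistedHasse u f ∈ S}
  one_mem' u _ := by
    rw [twistedHasse_one]
    split_ifs
    exacts [S.one_mem, S.zero_mem]
  zero_mem' u _ := by
    rw [← coeff_hasseExpansion, map_zero, map_zero]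
    exact S.zero_mem
  add_mem' hf hg u hu := by
    rw [twistedHasse_add]
    exact S.add_mem (hf u hu) (hg u hu)
  neg_mem' hf u hu := by
    rw [← coeff_hasseExpansion, map_neg, map_neg, coeff_hasseExpansion]
    exact S.neg_mem (hf u hu)
  mul_mem' {f g} hf hg u hu := by
    rw [twistedHasse_mul]
    refine S.sum_mem fun ij hij => S.mul_mem (hf _ ?_) (hg _ ?_)
    · exact (antidiagonal.fst_le hij).trans hu
    · exact (antidiagonal.snd_le hij).trans hu

end CommRing

lemma Subfield.mul_mem_iff_left {K : Type*} [DivisionRing K] (M : Subfield K) {x y : K}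
    (hx : x ∈ M) (hx0 : x ≠ 0) : x * y ∈ M ↔ y ∈ M :=
  ⟨fun h => inv_mul_cancel_left₀ hx0 y ▸ M.mul_mem (M.inv_mem hx) h, M.mul_mem hx⟩

lemma Subfield.mul_mem_iff_right {K : Type*} [DivisionRing K] (M : Subfield K) {x y : K}
    (hy : y ∈ M) (hy0 : y ≠ 0) : x * y ∈ M ↔ x ∈ M :=
  ⟨fun h => mul_inv_cancel_right₀ hy0 x ▸ M.mul_mem h (M.inv_mem hy), (M.mul_mem · hy)⟩

lemma twistedHasse_eq_mul_lhasse (u : ℕ) (f : LaurentSeries F) :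
    twistedHasse u f = single (1 : ℤ) (1 : F) ^ u * lhasse u f := by
  ext c
  rw [single_pow, one_pow, ← sub_add_cancel c (u • 1 : ℤ), coeff_single_mul_add]
  simp [lhasse]

lemma twistedHasse_mem_iff {M : Subfield (LaurentSeries F)} (ht : single (1 : ℤ) (1 : F) ∈ M)
    (u : ℕ) (f : LaurentSeries F) : twistedHasse u f ∈ M ↔ lhasse u f ∈ M := by
  rw [twistedHasse_eq_mul_lhasse,
    M.mul_mem_iff_left (M.pow_mem ht u) (pow_ne_zero _ (single_ne_zero one_ne_zero))]

lemma mem_hasseSubring_of_pow_mem (p : ℕ) [Fact p.Prime] [CharP F p]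
    {M : Subfield (LaurentSeries F)} {f : LaurentSeries F} (hf : f ≠ 0) (hfM : f ∈ M)
    {k n : ℕ} (hn : n.Coprime p) (hfn : f ^ n ∈ hasseSubring M.toSubring k) :
    f ∈ hasseSubring M.toSubring k := by
  set q := p ^ (k + 1)
  have hkq : k + 1 < q := Nat.lt_pow_self (Fact.out : p.Prime).one_lt
  obtain ⟨m, -, hm⟩ :=
    Nat.exists_mul_mod_eq_one_of_coprime (hn.pow_right (k + 1)) (by omega)
  obtain ⟨B, hB⟩ : ∃ B, n * m = q * B + 1 := ⟨n * m / q, by rw [← hm, Nat.div_add_mod]⟩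
  have hfactor : (f ^ n) ^ m = f * (f ^ B) ^ q := by
    rw [← pow_mul, hB, pow_succ', ← pow_mul, mul_comm B]
  intro u hu
  have h := pow_mem hfn m u hu
  rw [hfactor, twistedHasse_mul_pow_char_pow p (by omega)] at h
  exact (M.mul_mem_iff_right (M.pow_mem (M.pow_mem hfM B) q)
    (pow_ne_zero _ (pow_ne_zero _ hf))).1 h

/-- Let `f ≠ 0` in `F((t))` (char `p`), `k ≥ 0` and `n` coprime to `p`.
Let `E` be the subfield generated (over the prime field) by `t` and
`f, ∂⁽¹⁾f, …, ∂⁽ᵏ⁾f`, and `L` the subfield generated by `t` and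
`fⁿ, ∂⁽¹⁾(fⁿ), …, ∂⁽ᵏ⁾(fⁿ)`. Then each `∂⁽ʲ⁾f` (`j ≤ k`) lies in `L(f)`,
and in particular `E = L(f)`. -/
theorem hasse_field_ext (p : ℕ) [Fact p.Prime] [CharP F p]
    (f : LaurentSeries F) (hf : f ≠ 0) (k n : ℕ) (hn : Nat.Coprime n p)
    (E L : Subfield (LaurentSeries F))
    (hE : E = Subfield.closure
      ({HahnSeries.single (1 : ℤ) (1 : F)} ∪ {x | ∃ j ≤ k, x = lhasse j f}))
    (hL : L = Subfield.closure
      ({HahnSeries.single (1 : ℤ) (1 : F)} ∪ {x | ∃ j ≤ k, x = lhasse j (f ^ n)})) :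
    (∀ j ≤ k, lhasse j f ∈ Subfield.closure ((L : Set (LaurentSeries F)) ∪ {f})) ∧
      E = Subfield.closure ((L : Set (LaurentSeries F)) ∪ {f}) := by
  set M := Subfield.closure ((L : Set (LaurentSeries F)) ∪ {f})
  have hLM : L ≤ M := fun x hx => Subfield.subset_closure (Or.inl hx)
  have hfM : f ∈ M := Subfield.subset_closure (Or.inr rfl)
  have htL : single (1 : ℤ) (1 : F) ∈ L := hL ▸ Subfield.subset_closure (Or.inl rfl)
  have htE : single (1 : ℤ) (1 : F) ∈ E := hE ▸ Subfield.subset_closure (Or.inl rfl)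
  have hfE : f ∈ hasseSubring E.toSubring k := fun u hu =>
    (twistedHasse_mem_iff htE u f).2 (hE ▸ Subfield.subset_closure (Or.inr ⟨u, hu, rfl⟩))
  have hfnM : f ^ n ∈ hasseSubring M.toSubring k := fun u hu =>
    (twistedHasse_mem_iff (hLM htL) u _).2
      (hLM (hL ▸ Subfield.subset_closure (Or.inr ⟨u, hu, rfl⟩)))
  have hdM : ∀ j ≤ k, lhasse j f ∈ M := fun j hj =>
    (twistedHasse_mem_iff (hLM htL) j f).1 (mem_hasseSubring_of_pow_mem p hf hfM hn hfnM j hj)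
  have hLE : L ≤ E := by
    rw [hL, Subfield.closure_le]
    rintro x (rfl | ⟨j, hj, rfl⟩)
    exacts [htE, (twistedHasse_mem_iff htE j _).1 (pow_mem hfE n j hj)]
  refine ⟨hdM, le_antisymm ?_ (Subfield.closure_le.2 (Set.union_subset hLE ?_))⟩
  · rw [hE, Subfield.closure_le]
    rintro x (rfl | ⟨j, hj, rfl⟩)
    exacts [hLM htL, hdM j hj]
  · simpa using hfE 0 k.zero_le
end
end

section
/- Let F be a field of characteristic p, n ∈ ℕ with exact p-adic valuation s (i.e., p^s ∥ n), and f ∈ F((t)) a nonzero Laurent series. Write g = f^{n/p^s}. Then for 0 ≤ i ≤ n−1: ∂_t^{(i)}(f^n) = 0 if p^s does not divide i, and ∂_t^{(i)}(f^n) = (∂_t^{(i/p^s)}(g))^{p^s} if p^s divides i. -/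
/-!
In characteristic `p` the map `x ↦ x ^ p ^ s` is the Frobenius: the coefficient of `t ^ z` in
`x ^ p ^ s` is `(x.coeff (z / p ^ s)) ^ p ^ s` when `p ^ s ∣ z` and `0` otherwise, so
`f ^ n = g ^ p ^ s` has its support in `p ^ s ℤ`. The Hasse derivative multiplies coefficients by
binomial coefficients `choose (p ^ s * w) i`, and Lucas' theorem, read off from
`(1 + X) ^ (p ^ s * w) = ((1 + X) ^ w) ^ p ^ s`, says these vanish mod `p` unless `i = p ^ s * j`,
in which case they equal `choose w j`, a fixed point of Frobenius.
-/

noncomputable section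

open HahnSeries

variable {F : Type*} [Field F]

open scoped PowerSeries

namespace PowerSeries

theorem coeff_pow_expChar_pow {R : Type*} [CommRing R] (p : ℕ) [ExpChar R p] (s : ℕ)
    (φ : R⟦X⟧) (n : ℕ) :
    coeff n (φ ^ p ^ s) = if p ^ s ∣ n then coeff (n / p ^ s) φ ^ p ^ s else 0 := by
  rw [← MvPowerSeries.map_iterateFrobenius_expand p (expChar_ne_zero R p) φ s]
  change coeff n (map (iterateFrobenius R p s) (expand (p ^ s) _ φ)) = _
  rw [coeff_map, coeff_expand, apply_ite (iterateFrobenius R p s), map_zero, iterateFrobenius_def]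

theorem binomialSeries_nsmul {R A : Type*} [CommRing R] [BinomialRing R] [Ring A] [Algebra R A]
    (k : ℕ) (r : R) : binomialSeries A (k • r) = binomialSeries A r ^ k := by
  induction k with
  | zero => simp
  | succ k ih => rw [succ_nsmul, binomialSeries_add, ih, pow_succ]

end PowerSeries

section ExpChar

variable {R : Type*} [CommRing R] (p : ℕ) [ExpChar R p] (s : ℕ)

theorem intCast_pow_expChar_pow (c : ℤ) : (c : R) ^ p ^ s = c := by
  rw [← iterateFrobenius_def, map_intCast]

theorem Ring.intCast_choose_pow_mul (z : ℤ) (i : ℕ) :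
    ((Ring.choose ((p : ℤ) ^ s * z) i : ℤ) : R) =
      if p ^ s ∣ i then ((Ring.choose z (i / p ^ s) : ℤ) : R) else 0 := by
  have h := congrArg (PowerSeries.coeff i) (PowerSeries.binomialSeries_nsmul (A := R) (p ^ s) z)
  simp only [PowerSeries.coeff_pow_expChar_pow p s, PowerSeries.binomialSeries_coeff,
    Int.smul_one_eq_cast, nsmul_eq_mul, Nat.cast_pow] at h
  rw [h]
  split_ifs <;> simp [intCast_pow_expChar_pow]

namespace LaurentSeries

theorem coeff_coe_pow_expChar_pow (φ : R⟦X⟧) (z : ℤ) :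
    ((φ : LaurentSeries R) ^ p ^ s).coeff z =
      if (p : ℤ) ^ s ∣ z then (φ : LaurentSeries R).coeff (z / (p : ℤ) ^ s) ^ p ^ s else 0 := by
  rcases lt_or_ge z 0 with hz | hz
  · have hz' : z / (p : ℤ) ^ s < 0 :=
      Int.ediv_neg_of_neg_of_pos hz (by have := expChar_pos R p; positivity)
    rw [← map_pow, PowerSeries.coeff_coe, PowerSeries.coeff_coe, if_pos hz, if_pos hz',
      zero_pow (expChar_pow_pos R p s).ne', ite_self]
  · lift z to ℕ using hz
    have hdiv : (z : ℤ) / (p : ℤ) ^ s = ((z / p ^ s : ℕ) : ℤ) := by push_cast; rfl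
    rw [← map_pow, coeff_coe_powerSeries, hdiv, coeff_coe_powerSeries,
      PowerSeries.coeff_pow_expChar_pow]
    simp only [← Nat.cast_pow, Int.natCast_dvd_natCast]

theorem coeff_pow_expChar_pow (x : LaurentSeries R) (z : ℤ) :
    (x ^ p ^ s).coeff z = if (p : ℤ) ^ s ∣ z then x.coeff (z / (p : ℤ) ^ s) ^ p ^ s else 0 := by
  set o := x.order
  set φ := x.powerSeriesPart
  have hx : x = single o 1 * ofPowerSeries ℤ R φ := x.single_order_mul_powerSeriesPart.symm
  have hxq : x ^ p ^ s = single ((p : ℤ) ^ s * o) 1 * ofPowerSeries ℤ R φ ^ p ^ s := by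
    conv_lhs => rw [hx]
    rw [mul_pow, single_pow, one_pow, nsmul_eq_mul, Nat.cast_pow]
  have hdvd : (p : ℤ) ^ s ∣ z - p ^ s * o ↔ (p : ℤ) ^ s ∣ z := dvd_sub_left (dvd_mul_right _ _)
  have hcoeff :
      x.coeff (z / (p : ℤ) ^ s) = (ofPowerSeries ℤ R φ).coeff ((z - p ^ s * o) / p ^ s) := by
    have hq : (p : ℤ) ^ s ≠ 0 := by have := expChar_pos R p; positivity
    rw [Int.sub_mul_ediv_left _ _ hq]
    conv_lhs => rw [hx, ← sub_add_cancel (z / (p : ℤ) ^ s) o, coeff_single_mul_add, one_mul]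
  rw [hxq, ← sub_add_cancel z ((p : ℤ) ^ s * o), coeff_single_mul_add, one_mul,
    coeff_coe_pow_expChar_pow, sub_add_cancel]
  simp only [hdvd, hcoeff]

end LaurentSeries

end ExpChar

section Hasse

variable (p : ℕ) [ExpChar F p] (s : ℕ)

@[simp]
theorem lhasse_coeff (i : ℕ) (x : LaurentSeries F) (k : ℤ) :
    (lhasse i x).coeff k = ((Ring.choose (k + i) i : ℤ) : F) * x.coeff (k + i) :=
  rfl

theorem lhasse_pow_expChar_pow_of_not_dvd (x : LaurentSeries F) {i : ℕ} (hi : ¬ p ^ s ∣ i) :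
    lhasse i (x ^ p ^ s) = 0 := by
  ext k
  rw [lhasse_coeff, LaurentSeries.coeff_pow_expChar_pow, HahnSeries.coeff_zero]
  split_ifs with hk
  · obtain ⟨w, hw⟩ := hk
    rw [hw, Ring.intCast_choose_pow_mul, if_neg hi, zero_mul]
  · rw [mul_zero]

theorem lhasse_pow_mul_pow_expChar_pow (x : LaurentSeries F) (j : ℕ) :
    lhasse (p ^ s * j) (x ^ p ^ s) = lhasse j x ^ p ^ s := by
  ext k
  simp only [lhasse_coeff, LaurentSeries.coeff_pow_expChar_pow, Nat.cast_mul, Nat.cast_pow]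
  by_cases hk : (p : ℤ) ^ s ∣ k
  · obtain ⟨a, rfl⟩ := hk
    have hq : (p : ℤ) ^ s ≠ 0 := by have := expChar_pos F p; positivity
    rw [← mul_add, if_pos (dvd_mul_right _ _), if_pos (dvd_mul_right _ _),
      Int.mul_ediv_cancel_left _ hq, Int.mul_ediv_cancel_left _ hq, Ring.intCast_choose_pow_mul,
      if_pos (dvd_mul_right _ _), Nat.mul_div_cancel_left _ (expChar_pow_pos F p s),
      mul_pow, intCast_pow_expChar_pow]
  · have hk' : ¬ (p : ℤ) ^ s ∣ k + p ^ s * j := by rwa [dvd_add_left (dvd_mul_right _ _)]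
    rw [if_neg hk, if_neg hk', mul_zero]

end Hasse

theorem lhasse_pow_exact_valuation_general (p : ℕ) [Fact p.Prime] [CharP F p]
    (f : LaurentSeries F) (n s m : ℕ) (hnm : n = p ^ s * m)
    (g : LaurentSeries F) (hg : g = f ^ m) (i : ℕ) :
    (¬ (p ^ s ∣ i) → lhasse i (f ^ n) = 0) ∧
      (∀ j : ℕ, i = p ^ s * j → lhasse i (f ^ n) = (lhasse j g) ^ p ^ s) := by
  have hfg : f ^ n = g ^ p ^ s := by rw [hg, ← pow_mul, hnm, mul_comm]
  refine ⟨fun hi => ?_, fun j hij => ?_⟩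
  · rw [hfg, lhasse_pow_expChar_pow_of_not_dvd p s g hi]
  · rw [hfg, hij, lhasse_pow_mul_pow_expChar_pow]

/-- let `pˢ ∥ n` (exact power of `p` dividing `n`), `f ≠ 0`, and
`g = f^(n/pˢ)`. Then for `0 ≤ i ≤ n-1`: `∂⁽ⁱ⁾(fⁿ) = 0` if `pˢ ∤ i`, and
`∂⁽ⁱ⁾(fⁿ) = (∂⁽ⁱ/ᵖˢ⁾ g)^(pˢ)` if `pˢ ∣ i`. -/
theorem lhasse_pow_exact_valuation (p : ℕ) [Fact p.Prime] [CharP F p]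
    (f : LaurentSeries F) (hf : f ≠ 0) (n s m : ℕ) (hnm : n = p ^ s * m)
    (hm : ¬ p ∣ m) (g : LaurentSeries F) (hg : g = f ^ m) (i : ℕ) (hi : i ≤ n - 1) :
    (¬ (p ^ s ∣ i) → lhasse i (f ^ n) = 0) ∧
      (∀ j : ℕ, i = p ^ s * j → lhasse i (f ^ n) = (lhasse j g) ^ p ^ s) :=
  lhasse_pow_exact_valuation_general p f n s m hnm g hg i
end
end
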